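/- (Triple commutator bound) With H, Ψ, E, ε as above, ε² ≤ ⟨[[A*,H],[H,[H,A]]]⟩ / ⟨[A*,[H,A]]⟩, assuming the denominator is positive. -/

import Mathlib

/-!
Write `B = H - E`. Since `HΨ = EΨ`, the two commutator expectations reduce to
`⟨AΨ, B AΨ⟩ + ⟨A*Ψ, B A*Ψ⟩` and `⟨AΨ, B³ AΨ⟩ + ⟨A*Ψ, B³ A*Ψ⟩`. Instead of the spectral
inequality `ε² B ≤ B³` on `K`, an elementary argument suffices: on the `B`-invariant subspace `K`,
where `B ≥ ε ≥ 0`, Cauchy–Schwarz gives `‖Bx‖ ≥ ε‖x‖`, and then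
`⟨x, B³x⟩ = ⟨Bx, B(Bx)⟩ ≥ ε‖Bx‖² ≥ ε²‖x‖‖Bx‖ ≥ ε²⟨x, Bx⟩`.
-/

open ContinuousLinearMap

section LowerBound

variable {𝕜 V : Type*} [RCLike 𝕜] [NormedAddCommGroup V] [InnerProductSpace 𝕜 V]
  {T : V →ₗ[𝕜] V} {ε : ℝ}

open RCLike

theorem mul_norm_sq_le_re_inner_apply_self {K : Submodule 𝕜 V}
    (h : ∀ x ∈ K, ‖x‖ = 1 → ε ≤ re (inner 𝕜 x (T x))) {x : V} (hx : x ∈ K) :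
    ε * ‖x‖ ^ 2 ≤ re (inner 𝕜 x (T x)) := by
  rcases eq_or_ne x 0 with rfl | hx0
  · simp
  have hnorm : 0 < ‖x‖ := norm_pos_iff.mpr hx0
  have hunit := h _ (K.smul_mem ((‖x‖⁻¹ : ℝ) : 𝕜) hx)
    (by rw [ofReal_inv]; exact norm_smul_inv_norm hx0)
  have hscale : re (inner 𝕜 (((‖x‖⁻¹ : ℝ) : 𝕜) • x) (T (((‖x‖⁻¹ : ℝ) : 𝕜) • x)))
      = (‖x‖ ^ 2)⁻¹ * re (inner 𝕜 x (T x)) := by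
    rw [map_smul, inner_smul_real_left, inner_smul_real_right, smul_smul, smul_re]
    congr 1
    ring
  rw [hscale, le_inv_mul_iff₀ (pow_pos hnorm 2), mul_comm] at hunit
  exact hunit

theorem mul_norm_le_norm_apply_of_mul_norm_sq_le {x : V}
    (h : ε * ‖x‖ ^ 2 ≤ re (inner 𝕜 x (T x))) : ε * ‖x‖ ≤ ‖T x‖ := by
  rcases (norm_nonneg x).eq_or_lt with hx | hx
  · simp [← hx]
  have hcs : re (inner 𝕜 x (T x)) ≤ ‖x‖ * ‖T x‖ := (re_le_norm _).trans (norm_inner_le_norm _ _)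
  refine le_of_mul_le_mul_right ?_ hx
  nlinarith

theorem LinearMap.IsSymmetric.sq_mul_re_inner_le_re_inner_apply_apply_apply
    (hT : T.IsSymmetric) {K : Set V} (hK : Set.MapsTo T K K) (hε : 0 ≤ ε)
    (hlow : ∀ x ∈ K, ε * ‖x‖ ^ 2 ≤ re (inner 𝕜 x (T x))) ⦃x : V⦄ (hx : x ∈ K) :
    ε ^ 2 * re (inner 𝕜 x (T x)) ≤ re (inner 𝕜 x (T (T (T x)))) := by
  have hεx : ε * ‖x‖ ≤ ‖T x‖ := mul_norm_le_norm_apply_of_mul_norm_sq_le (hlow x hx)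
  calc ε ^ 2 * re (inner 𝕜 x (T x)) ≤ ε ^ 2 * (‖x‖ * ‖T x‖) :=
        mul_le_mul_of_nonneg_left ((re_le_norm _).trans (norm_inner_le_norm _ _)) (sq_nonneg ε)
    _ = ε * ((ε * ‖x‖) * ‖T x‖) := by ring
    _ ≤ ε * (‖T x‖ * ‖T x‖) := by gcongr
    _ = ε * ‖T x‖ ^ 2 := by ring
    _ ≤ re (inner 𝕜 (T x) (T (T x))) := hlow _ (hK hx)
    _ = re (inner 𝕜 x (T (T (T x)))) := by rw [hT]

end LowerBound

section Commutators

variable {V : Type*} [NormedAddCommGroup V] [InnerProductSpace ℂ V] [CompleteSpace V]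
  {H : V →L[ℂ] V} {E : ℝ} {Ψ : V}

theorem inner_apply_eq_mul_inner_of_eigenvector (hH : IsSelfAdjoint H) (hΨ : H Ψ = (E : ℂ) • Ψ)
    (x : V) : inner ℂ Ψ (H x) = E * inner ℂ Ψ x := by
  rw [← hH.adjoint_eq, adjoint_inner_right, hΨ, inner_smul_left, Complex.conj_ofReal]

theorem inner_double_commutator_eq (hH : IsSelfAdjoint H) (hΨ : H Ψ = (E : ℂ) • Ψ)
    (A : V →L[ℂ] V) :
    inner ℂ Ψ ((adjoint A * (H * A - A * H) - (H * A - A * H) * adjoint A) Ψ) =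
      inner ℂ (A Ψ) ((H - (E : ℂ) • 1) (A Ψ)) +
        inner ℂ (adjoint A Ψ) ((H - (E : ℂ) • 1) (adjoint A Ψ)) := by
  simp only [mul_apply_eq_comp, sub_apply, smul_apply, one_apply_eq_self, map_sub, map_smul, hΨ,
    inner_sub_right, inner_smul_right, adjoint_inner_right, ← adjoint_inner_left A,
    inner_apply_eq_mul_inner_of_eigenvector hH hΨ]
  ring

theorem inner_triple_commutator_eq (hH : IsSelfAdjoint H) (hΨ : H Ψ = (E : ℂ) • Ψ)
    (A : V →L[ℂ] V) :
    inner ℂ Ψ (((adjoint A * H - H * adjoint A) * (H * (H * A - A * H) - (H * A - A * H) * H) -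
        (H * (H * A - A * H) - (H * A - A * H) * H) * (adjoint A * H - H * adjoint A)) Ψ) =
      inner ℂ (A Ψ) ((H - (E : ℂ) • 1) ((H - (E : ℂ) • 1) ((H - (E : ℂ) • 1) (A Ψ)))) +
        inner ℂ (adjoint A Ψ)
          ((H - (E : ℂ) • 1) ((H - (E : ℂ) • 1) ((H - (E : ℂ) • 1) (adjoint A Ψ)))) := by
  simp only [mul_apply_eq_comp, sub_apply, smul_apply, one_apply_eq_self, map_sub, map_smul, hΨ,
    inner_sub_right, inner_smul_right, adjoint_inner_right, ← adjoint_inner_left A,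
    inner_apply_eq_mul_inner_of_eigenvector hH hΨ]
  ring

end Commutators

theorem stmt_13_general {V : Type*} [NormedAddCommGroup V] [InnerProductSpace ℂ V]
    [CompleteSpace V] (H A : V →L[ℂ] V) (hH : IsSelfAdjoint H) (E ε : ℝ)
    (Ψ : V) (hground : H Ψ = (E : ℂ) • Ψ)
    (hpos : ∀ x : V, 0 ≤ ((inner ℂ x (H x) : ℂ)).re - E * ‖x‖ ^ 2)
    (K : Submodule ℂ V)
    (hKA : A Ψ ∈ K) (hKA' : (adjoint A) Ψ ∈ K) (hKinv : ∀ x ∈ K, H x ∈ K)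
    (hε : IsGLB {r : ℝ | ∃ x ∈ K, ‖x‖ = 1 ∧ r = ((inner ℂ x (H x) : ℂ)).re - E} ε)
    (hden : 0 < ((inner ℂ Ψ (((adjoint A) * (H * A - A * H) -
      (H * A - A * H) * (adjoint A)) Ψ) : ℂ)).re) :
    ε ^ 2 ≤
      ((inner ℂ Ψ ((((adjoint A) * H - H * (adjoint A)) *
          (H * (H * A - A * H) - (H * A - A * H) * H) -
          (H * (H * A - A * H) - (H * A - A * H) * H) *
          ((adjoint A) * H - H * (adjoint A))) Ψ) : ℂ)).re /
      ((inner ℂ Ψ (((adjoint A) * (H * A - A * H) -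
        (H * A - A * H) * (adjoint A)) Ψ) : ℂ)).re := by
  set B : V →L[ℂ] V := H - (E : ℂ) • 1
  have hB : IsSelfAdjoint B := hH.sub (.smul (Complex.conj_ofReal E) (.one _))
  have hBK : Set.MapsTo B K K := fun x hx => K.sub_mem (hKinv x hx) (K.smul_mem _ hx)
  have hBre (x : V) : (inner ℂ x (B x)).re = (inner ℂ x (H x)).re - E * ‖x‖ ^ 2 := by
    simp [B, inner_self_eq_norm_sq_to_K, ← Complex.ofReal_pow]
  have hε0 : 0 ≤ ε := hε.2 fun r ⟨x, _, hx1, hr⟩ => by simpa [hr, hx1] using hpos x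
  have hlow (x : V) (hx : x ∈ K) : ε * ‖x‖ ^ 2 ≤ (inner ℂ x (B x)).re :=
    mul_norm_sq_le_re_inner_apply_self (T := (B : V →ₗ[ℂ] V))
      (fun y hy hy1 => by simpa [hBre, hy1] using hε.1 ⟨y, hy, hy1, rfl⟩) hx
  rw [le_div_iff₀ hden, inner_double_commutator_eq hH hground,
    inner_triple_commutator_eq hH hground, Complex.add_re, Complex.add_re, mul_add]
  have hcube := hB.isSymmetric.sq_mul_re_inner_le_re_inner_apply_apply_apply hBK hε0 hlow
  exact add_le_add (hcube hKA) (hcube hKA')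

/-- Triple commutator bound: with `H` self-adjoint, `HΨ = EΨ`, `H − E ≥ 0`, and
`ε = inf spec(H|_K) − E` where `K` is the smallest closed `H`-invariant subspace
containing `AΨ` and `A*Ψ`, one has
`ε² ≤ ⟨[[A*,H],[H,[H,A]]]⟩ / ⟨[A*,[H,A]]⟩` when the denominator is positive. -/
theorem stmt_13 {V : Type*} [NormedAddCommGroup V] [InnerProductSpace ℂ V]
    [CompleteSpace V] (H A : V →L[ℂ] V) (hH : IsSelfAdjoint H) (E ε : ℝ)
    (Ψ : V) (hΨ : ‖Ψ‖ = 1) (hground : H Ψ = (E : ℂ) • Ψ)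
    (hpos : ∀ x : V, 0 ≤ ((inner ℂ x (H x) : ℂ)).re - E * ‖x‖ ^ 2)
    (K : Submodule ℂ V) (hKclosed : IsClosed (K : Set V))
    (hKA : A Ψ ∈ K) (hKA' : (adjoint A) Ψ ∈ K) (hKinv : ∀ x ∈ K, H x ∈ K)
    (hKmin : ∀ K' : Submodule ℂ V, IsClosed (K' : Set V) → A Ψ ∈ K' →
      (adjoint A) Ψ ∈ K' → (∀ x ∈ K', H x ∈ K') → K ≤ K')
    (hε : IsGLB {r : ℝ | ∃ x ∈ K, ‖x‖ = 1 ∧ r = ((inner ℂ x (H x) : ℂ)).re - E} ε)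
    (hden : 0 < ((inner ℂ Ψ (((adjoint A) * (H * A - A * H) -
      (H * A - A * H) * (adjoint A)) Ψ) : ℂ)).re) :
    ε ^ 2 ≤
      ((inner ℂ Ψ ((((adjoint A) * H - H * (adjoint A)) *
          (H * (H * A - A * H) - (H * A - A * H) * H) -
          (H * (H * A - A * H) - (H * A - A * H) * H) *
          ((adjoint A) * H - H * (adjoint A))) Ψ) : ℂ)).re /
      ((inner ℂ Ψ (((adjoint A) * (H * A - A * H) -
        (H * A - A * H) * (adjoint A)) Ψ) : ℂ)).re :=
  stmt_13_general H A hH E ε Ψ hground hpos K hKA hKA' hKinv hε hden
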